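/- arXiv:2204.01497 — 6 statements merged into one kernel-verified Lean document; each statement's English description precedes it below -/
import Mathlib

section
/- For all n ≥ 0, the n-th derivative of sec(x) equals Q_n(tan(x))·sec(x), where Q_n is defined by Q_0(x) = 1 and Q_{n+1}(x) = (1+x^2)·Q_n'(x) + x·Q_n(x). -/
/-! Since `tan' = 1 + tan ^ 2` and `sec' = tan * sec`, the product rule turns `Q (tan) * sec` into
`((1 + X ^ 2) * Q' + X * Q) (tan) * sec`; the identity then propagates by induction, since it holds
on the open set where `cos ≠ 0`, and so survives differentiation. -/

open Polynomial

/-- Derivative polynomials for the secant: `Q 0 = 1`, `Q (n+1) = (1+X^2) * (Q n)' + X * Q n`. -/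
noncomputable def secDerivPoly : ℕ → Polynomial ℝ
  | 0 => 1
  | n + 1 => (1 + X ^ 2) * derivative (secDerivPoly n) + X * secDerivPoly n

namespace Real

variable {x : ℝ}

theorem hasDerivAt_tan_one_add_sq (hx : cos x ≠ 0) : HasDerivAt tan (1 + tan x ^ 2) x := by
  convert hasDerivAt_tan hx using 1
  rw [one_div, ← inv_one_add_tan_sq hx, inv_inv]

theorem hasDerivAt_inv_cos (hx : cos x ≠ 0) :
    HasDerivAt (fun t => (cos t)⁻¹) (tan x * (cos x)⁻¹) x := by
  refine ((hasDerivAt_cos x).inv hx).congr_deriv ?_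
  rw [tan_eq_sin_div_cos]
  field_simp

theorem hasDerivAt_eval_tan_mul_inv_cos (p : ℝ[X]) (hx : cos x ≠ 0) :
    HasDerivAt (fun t => p.eval (tan t) * (cos t)⁻¹)
      (((1 + X ^ 2) * derivative p + X * p).eval (tan x) * (cos x)⁻¹) x := by
  refine (((p.hasDerivAt _).comp x (hasDerivAt_tan_one_add_sq hx)).mul
    (hasDerivAt_inv_cos hx)).congr_deriv ?_
  simp only [eval_add, eval_mul, eval_pow, eval_one, eval_X, Function.comp_apply]
  ring

end Real

theorem iteratedDeriv_sec_eq (n : ℕ) (x : ℝ) (hx : Real.cos x ≠ 0) :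
    iteratedDeriv n (fun t => (Real.cos t)⁻¹) x =
      (secDerivPoly n).eval (Real.tan x) * (Real.cos x)⁻¹ := by
  induction n generalizing x with
  | zero => simp [secDerivPoly]
  | succ n ih =>
    have hcos_open : IsOpen {y : ℝ | Real.cos y ≠ 0} :=
      isOpen_ne_fun Real.continuous_cos continuous_const
    have hn : iteratedDeriv n (fun t => (Real.cos t)⁻¹) =ᶠ[nhds x]
        fun t => (secDerivPoly n).eval (Real.tan t) * (Real.cos t)⁻¹ :=
      Filter.eventually_of_mem (hcos_open.mem_nhds hx) ih
    rw [iteratedDeriv_succ, hn.deriv_eq, (Real.hasDerivAt_eval_tan_mul_inv_cos _ hx).deriv,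
      secDerivPoly]
end

section
/- The exponential generating function Σ_{n≥0} Q_n(x)·t^n/n! equals 1/(cos(t) − x·sin(t)), for real x and t with cos(t) − x·sin(t) > 0 in a neighborhood of t = 0. -/
open Polynomial Filter Topology

/-!
With `c t = cos t - x sin t` and `w t = (sin t + x cos t) / c t` one has `w' = 1 + w²` and
`(1 / c)' = w · (1 / c)`. The recursion defining `Q_n` is exactly what these two rules produce when
differentiating `Q_n(w) · (1 / c)`, so the `n`-th derivative of `1 / c` is `Q_n(w) / c`, which equals
`Q_n(x)` at `t = 0`. Since `1 / c` is real analytic at `0`, its Taylor series converges to it nearby.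
-/

theorem AnalyticAt.eventually_hasSum_iteratedDeriv {𝕜 E : Type*} [NontriviallyNormedField 𝕜]
    [CharZero 𝕜] [NormedAddCommGroup E] [NormedSpace 𝕜 E] [CompleteSpace E] {f : 𝕜 → E} {x : 𝕜}
    (hf : AnalyticAt 𝕜 f x) :
    ∀ᶠ z in 𝓝 x, HasSum (fun n ↦ ((n.factorial : 𝕜)⁻¹ * (z - x) ^ n) • iteratedDeriv n f x) (f z) := by
  obtain ⟨p, r, hp⟩ := hf
  filter_upwards [Metric.eball_mem_nhds x hp.r_pos] with z hz
  have hsum := hp.hasSum_iteratedFDeriv (y := z - x) (by simpa [edist_dist, dist_eq_norm] using hz)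
  rw [add_sub_cancel] at hsum
  convert hsum using 2 with n
  simp [iteratedFDeriv_apply_eq_iteratedDeriv_mul_prod, mul_smul]

theorem hasDerivAt_secDerivPoly_eval_mul {w g : ℝ → ℝ} {t : ℝ}
    (hw : HasDerivAt w (1 + w t ^ 2) t) (hg : HasDerivAt g (w t * g t) t) (n : ℕ) :
    HasDerivAt (fun t ↦ (secDerivPoly n).eval (w t) * g t)
      ((secDerivPoly (n + 1)).eval (w t) * g t) t := by
  refine (((secDerivPoly n).hasDerivAt (w t)).comp t hw |>.mul hg).congr_deriv ?_
  simp only [Function.comp_apply, secDerivPoly, eval_add, eval_mul, eval_one, eval_pow, eval_X]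
  ring

theorem iteratedDeriv_eqOn_secDerivPoly_eval_mul {w g : ℝ → ℝ} {U : Set ℝ} (hU : IsOpen U)
    (hw : ∀ t ∈ U, HasDerivAt w (1 + w t ^ 2) t) (hg : ∀ t ∈ U, HasDerivAt g (w t * g t) t)
    (n : ℕ) : Set.EqOn (iteratedDeriv n g) (fun t ↦ (secDerivPoly n).eval (w t) * g t) U := by
  induction n with
  | zero => intro t _; simp [secDerivPoly]
  | succ n ih =>
    intro t ht
    rw [iteratedDeriv_succ, (ih.eventuallyEq_of_mem (hU.mem_nhds ht)).deriv_eq]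
    exact (hasDerivAt_secDerivPoly_eval_mul (hw t ht) (hg t ht) n).deriv

section Trigonometric

variable (x : ℝ) {t : ℝ}

theorem hasDerivAt_sin_add_mul_cos_div_cos_sub_mul_sin (ht : Real.cos t - x * Real.sin t ≠ 0) :
    HasDerivAt (fun t ↦ (Real.sin t + x * Real.cos t) / (Real.cos t - x * Real.sin t))
      (1 + ((Real.sin t + x * Real.cos t) / (Real.cos t - x * Real.sin t)) ^ 2) t := by
  have hnum := (Real.hasDerivAt_sin t).add ((Real.hasDerivAt_cos t).const_mul x)
  have hden := (Real.hasDerivAt_cos t).sub ((Real.hasDerivAt_sin t).const_mul x)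
  refine (hnum.div hden ht).congr_deriv ?_
  simp only [Pi.add_apply, Pi.sub_apply]
  field_simp
  ring

theorem hasDerivAt_inv_cos_sub_mul_sin (ht : Real.cos t - x * Real.sin t ≠ 0) :
    HasDerivAt (fun t ↦ (Real.cos t - x * Real.sin t)⁻¹)
      ((Real.sin t + x * Real.cos t) / (Real.cos t - x * Real.sin t) *
        (Real.cos t - x * Real.sin t)⁻¹) t := by
  have hden := (Real.hasDerivAt_cos t).sub ((Real.hasDerivAt_sin t).const_mul x)
  refine (hden.inv ht).congr_deriv ?_
  simp only [Pi.sub_apply]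
  field_simp
  ring

end Trigonometric

theorem secDerivPoly_egf (x : ℝ) :
    ∀ᶠ t in 𝓝 (0 : ℝ),
      ∑' n : ℕ, (secDerivPoly n).eval x * t ^ n / (n.factorial : ℝ) =
        1 / (Real.cos t - x * Real.sin t) := by
  set U := {t : ℝ | Real.cos t - x * Real.sin t ≠ 0}
  have hU : IsOpen U := isOpen_ne_fun (by fun_prop) continuous_const
  have hderiv (n : ℕ) :
      iteratedDeriv n (fun t ↦ (Real.cos t - x * Real.sin t)⁻¹) 0 = (secDerivPoly n).eval x := by
    simpa using iteratedDeriv_eqOn_secDerivPoly_eval_mul hU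
      (fun t ↦ hasDerivAt_sin_add_mul_cos_div_cos_sub_mul_sin x)
      (fun t ↦ hasDerivAt_inv_cos_sub_mul_sin x) n (by simp [U] : (0 : ℝ) ∈ U)
  have hanalytic : AnalyticAt ℝ (fun t ↦ (Real.cos t - x * Real.sin t)⁻¹) 0 :=
    (Real.analyticAt_cos.sub (analyticAt_const.mul Real.analyticAt_sin)).inv (by simp)
  filter_upwards [hanalytic.eventually_hasSum_iteratedDeriv] with t ht
  rw [one_div, ← ht.tsum_eq]
  refine congrArg tsum (funext fun n ↦ ?_)
  rw [hderiv, smul_eq_mul, sub_zero]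
  ring
end

section
/- Let D be the derivation on ℝ[a, a⁻¹, x] determined by D(a) = a·x and D(x) = 1 + x². Then for all n ≥ 0, D^{2n}(a⁻¹) = (−1)^n·a⁻¹ and D^{2n+1}(a⁻¹) = (−1)^{n+1}·a⁻¹·x. -/
/-- For the derivation determined by the grammar `a → a·x`, `x → 1 + x²` on a commutative
ℝ-algebra containing `a`, its inverse `ai = a⁻¹`, and `x`, the iterates on `a⁻¹` satisfy
`D^{2n}(a⁻¹) = (−1)^n·a⁻¹` and `D^{2n+1}(a⁻¹) = (−1)^{n+1}·a⁻¹·x`. -/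
theorem derivation_iterate_inv_a
    {A : Type*} [CommRing A] [Algebra ℝ A] (D : Derivation ℝ A A)
    (a ai x : A) (hai : a * ai = 1)
    (hDa : D a = a * x) (hDx : D x = 1 + x ^ 2) (n : ℕ) :
    (⇑D)^[2 * n] ai = (-1 : A) ^ n * ai ∧
      (⇑D)^[2 * n + 1] ai = (-1 : A) ^ (n + 1) * ai * x := by
  have h0 : D (a * ai) = 0 := by rw [hai]; exact D.map_one_eq_zero
  have hDai : D ai = -(ai * x) := by
    have h1 : a * D ai + ai * (a * x) = 0 := by
      rw [← hDa]; rw [D.leibniz, smul_eq_mul, smul_eq_mul] at h0; linear_combination h0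
    linear_combination ai * h1 - (D ai + ai * x) * hai
  induction n with
  | zero =>
    constructor
    · simp
    · simpa [hDai] using by ring_nf
  | succ n ih =>
    obtain ⟨ih1, ih2⟩ := ih
    have hneg1 : D ((-1 : A) ^ (n + 1)) = 0 := by
      have : D (-1 : A) = 0 := by
        have := D.map_one_eq_zero
        simpa using D.map_neg 1 |>.trans (by rw [this, neg_zero])
      induction (n + 1) with
      | zero => simpa using D.map_one_eq_zero
      | succ k ihk => rw [pow_succ, D.leibniz, ihk, this]; simp
    have key : (⇑D)^[2 * (n + 1)] ai = (-1 : A) ^ (n + 1) * ai := by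
      have : 2 * (n + 1) = (2 * n + 1) + 1 := by ring
      rw [this, Function.iterate_succ_apply', ih2, D.leibniz, D.leibniz, hneg1, hDai, hDx]
      simp only [smul_eq_mul]
      ring
    refine ⟨key, ?_⟩
    rw [Function.iterate_succ_apply', key, D.leibniz, hneg1, hDai]
    simp only [smul_eq_mul]
    ring
end

section
/- Let D be the derivation on ℝ[x, y] with D(x) = x·y and D(y) = x². Then for all k ≥ 0, D^k(x·y⁻¹) = x·y⁻¹·(y − x)^k. -/
/-- For the derivation with `D(x) = x·y` and `D(y) = x·y` (the Eulerian grammar), extended by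
the Leibniz rule to `y⁻¹`, one has `D^k(x·y⁻¹) = x·y⁻¹·(y − x)^k` for all `k ≥ 0`. -/
theorem derivation_iterate_x_mul_inv_y
    {A : Type*} [CommRing A] [Algebra ℝ A] (D : Derivation ℝ A A)
    (x y yi : A) (hyi : y * yi = 1)
    (hDx : D x = x * y) (hDy : D y = x * y) (k : ℕ) :
    (⇑D)^[k] (x * yi) = x * yi * (y - x) ^ k := by
  have h0 : y * D yi + yi * D y = 0 := by
    have h1 : D (y * yi) = 0 := by rw [hyi]; exact D.map_one_eq_zero
    rw [D.leibniz, smul_eq_mul, smul_eq_mul] at h1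
    exact h1
  have hDyi : D yi = -(x * yi) := by
    rw [hDy] at h0
    linear_combination yi * h0 - (D yi + x * yi) * hyi
  have hDxy : D (x * yi) = x * yi * (y - x) := by
    rw [D.leibniz, smul_eq_mul, smul_eq_mul, hDx, hDyi]
    ring
  induction k with
  | zero => simp
  | succ n ih =>
    rw [Function.iterate_succ_apply', ih]
    have hpow : D ((y - x) ^ n) = 0 := by
      rw [D.leibniz_pow, map_sub, hDx, hDy, sub_self]
      simp
    rw [D.leibniz, hpow, smul_zero, zero_add, smul_eq_mul, hDxy, pow_succ]
    ring
end

section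
/- Let E_n(u,v) be defined by the derivation D with D(u) = uv, D(v) = u, E_n(u,v) = D^n(v) (with E_0 = v), and let D_n(u,v) be defined by the derivation with D(u) = 2uv, D(v) = u, D_n(u,v) = D^n(v). Then for all n ≥ 0, D_n(2u, v) = 2^n·E_n(u,v). -/
open MvPolynomial

/-- The André derivation `D_E(u) = uv`, `D_E(v) = u` (here `u = X 0`, `v = X 1`). -/
noncomputable def andreD (f : MvPolynomial (Fin 2) ℝ) : MvPolynomial (Fin 2) ℝ :=
  X 0 * X 1 * pderiv 0 f + X 0 * pderiv 1 f

/-- The André polynomials `E_n(u,v) = D_E^n(v)`. -/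
noncomputable def andrePoly (n : ℕ) : MvPolynomial (Fin 2) ℝ := andreD^[n] (X 1)

/-- The Dumont derivation `D_D(u) = 2uv`, `D_D(v) = u`. -/
noncomputable def dumontD (f : MvPolynomial (Fin 2) ℝ) : MvPolynomial (Fin 2) ℝ :=
  2 * X 0 * X 1 * pderiv 0 f + X 0 * pderiv 1 f

/-- The Dumont polynomials `D_n(u,v) = D_D^n(v)`. -/
noncomputable def dumontPoly (n : ℕ) : MvPolynomial (Fin 2) ℝ := dumontD^[n] (X 1)

lemma pd_two (i : Fin 2) : pderiv i (2 : MvPolynomial (Fin 2) ℝ) = 0 := by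
  rw [show (2 : MvPolynomial (Fin 2) ℝ) = C 2 from (map_ofNat C 2).symm]; simp

noncomputable def sub2 : MvPolynomial (Fin 2) ℝ →ₐ[ℝ] MvPolynomial (Fin 2) ℝ :=
  MvPolynomial.aeval ![2 * X 0, X 1]

lemma pderiv_sub2 (i : Fin 2) (f : MvPolynomial (Fin 2) ℝ) :
    pderiv i (sub2 f) = ![(2 : MvPolynomial (Fin 2) ℝ), 1] i * sub2 (pderiv i f) := by
  induction f using MvPolynomial.induction_on with
  | C a => simp [sub2]
  | add f g hf hg => simp [map_add, hf, hg]; ring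
  | mul_X f j hf =>
      simp only [map_mul, sub2, aeval_X, pderiv_mul] at *
      fin_cases i <;> fin_cases j <;>
        simp_all [pderiv_X, Pi.single, Function.update, sub2, pd_two] <;> ring

lemma sub2_dumontD (f : MvPolynomial (Fin 2) ℝ) :
    sub2 (dumontD f) = 2 * andreD (sub2 f) := by
  have h0 := pderiv_sub2 0 f
  have h1 := pderiv_sub2 1 f
  simp only [Matrix.cons_val_zero, Matrix.cons_val_one, Matrix.head_cons, one_mul] at h0 h1
  simp only [dumontD, andreD, map_add, map_mul, h0, h1]
  have : sub2 (X 0) = 2 * X 0 := by simp [sub2]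
  have h2 : sub2 (X 1) = X 1 := by simp [sub2]
  have h3 : sub2 2 = 2 := by rw [show (2 : MvPolynomial (Fin 2) ℝ) = C 2 from (map_ofNat C 2).symm]; simp [sub2]
  rw [this, h2, h3]; ring

lemma andreD_smul (c : MvPolynomial (Fin 2) ℝ) (hc : pderiv 0 c = 0) (hc1 : pderiv 1 c = 0)
    (f : MvPolynomial (Fin 2) ℝ) : andreD (c * f) = c * andreD f := by
  simp [andreD, pderiv_mul, hc, hc1]; ring

/-- `D_n(2u, v) = 2^n · E_n(u, v)`. -/
theorem dumontPoly_two_u_eq (n : ℕ) :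
    MvPolynomial.aeval ![2 * X 0, X 1] (dumontPoly n) = 2 ^ n * andrePoly n := by
  show sub2 (dumontPoly n) = 2 ^ n * andrePoly n
  induction n with
  | zero => simp [dumontPoly, andrePoly, sub2]
  | succ n ih =>
      have : dumontPoly (n + 1) = dumontD (dumontPoly n) := by
        simp [dumontPoly, Function.iterate_succ_apply']
      rw [this, sub2_dumontD, ih,
        andreD_smul _ (by simp [pderiv_pow, pd_two]) (by simp [pderiv_pow, pd_two])]
      have : andrePoly (n + 1) = andreD (andrePoly n) := by
        simp [andrePoly, Function.iterate_succ_apply']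
      rw [this]; ring
end

section
/- For all n ≥ 0, L_n(4x/(1+x)²) = (1+x)^{−n}·Σ_{k=0}^{n} C(n,k)·(1−x)^{n−k}·2^k·A_k(x), where L_n(x) = Σ_k L(n,k)x^k is the left peak polynomial (L(n,k) = number of permutations of [n] with k left peaks) and A_k(x) is the k-th Eulerian polynomial. -/
open Finset

/-- The word `σ₁ σ₂ … σ_n` of a permutation of `Fin n`, padded with `0` outside `1 ≤ j ≤ n`;
the letter at position `j` (for `1 ≤ j ≤ n`) is `σ(j-1) + 1`. -/
def permWord (n : ℕ) (σ : Equiv.Perm (Fin n)) : ℕ → ℕ := fun j =>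
  if h : 0 < j ∧ j ≤ n then (σ ⟨j - 1, by omega⟩ : ℕ) + 1 else 0

/-- The number of left peaks of `σ`: indices `1 ≤ i < n` with `σ_{i−1} < σ_i > σ_{i+1}`,
where `σ₀ = 0`. -/
def numLeftPeaks (n : ℕ) (σ : Equiv.Perm (Fin n)) : ℕ :=
  ((Finset.range (n + 1)).filter fun i =>
    1 ≤ i ∧ i < n ∧ permWord n σ (i - 1) < permWord n σ i ∧
      permWord n σ (i + 1) < permWord n σ i).card

/-- The left peak polynomial `L_n(x) = Σ_σ x^{lpk(σ)}` over permutations of `[n]`. -/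
noncomputable def leftPeakEval (n : ℕ) (x : ℝ) : ℝ :=
  ∑ σ : Equiv.Perm (Fin n), x ^ numLeftPeaks n σ

/-- The number of descents of `σ`. -/
def numDescents (n : ℕ) (σ : Equiv.Perm (Fin n)) : ℕ :=
  ((Finset.range n).filter fun i =>
    1 ≤ i ∧ i < n ∧ permWord n σ (i + 1) < permWord n σ i).card

/-- The Eulerian polynomial `A_k(x) = Σ_σ x^{des(σ)+1}` for `k ≥ 1`, with `A_0(x) = 1`. -/
noncomputable def eulerianEval (k : ℕ) (x : ℝ) : ℝ :=
  if k = 0 then 1 else ∑ σ : Equiv.Perm (Fin k), x ^ (numDescents k σ + 1)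

namespace Petersen

def Dset (n : ℕ) (w : ℕ → ℕ) : Finset ℕ :=
  (Finset.range n).filter fun i => 1 ≤ i ∧ i < n ∧ w (i + 1) < w i

def Pset (n : ℕ) (w : ℕ → ℕ) : Finset ℕ :=
  (Finset.range (n + 1)).filter fun i =>
    1 ≤ i ∧ i < n ∧ w (i - 1) < w i ∧ w (i + 1) < w i

lemma numDescents_eq (n : ℕ) (σ : Equiv.Perm (Fin n)) :
    numDescents n σ = (Dset n (permWord n σ)).card := rfl

lemma numLeftPeaks_eq (n : ℕ) (σ : Equiv.Perm (Fin n)) :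
    numLeftPeaks n σ = (Pset n (permWord n σ)).card := rfl

lemma mem_Dset {m i : ℕ} {v : ℕ → ℕ} :
    i ∈ Dset m v ↔ 1 ≤ i ∧ i < m ∧ v (i + 1) < v i := by
  simp only [Dset, Finset.mem_filter, Finset.mem_range]
  omega

lemma mem_Pset {m i : ℕ} {v : ℕ → ℕ} :
    i ∈ Pset m v ↔ 1 ≤ i ∧ i < m ∧ v (i - 1) < v i ∧ v (i + 1) < v i := by
  simp only [Pset, Finset.mem_filter, Finset.mem_range]
  omega

lemma union_filter_erase (D : Finset ℕ) (q : ℕ) :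
    (D.filter (· < q)) ∪ (D.filter (fun j => q < j)) = D.erase q := by
  ext i
  simp only [Finset.mem_union, Finset.mem_filter, Finset.mem_erase]
  constructor
  · rintro (⟨h, h2⟩ | ⟨h, h2⟩) <;> exact ⟨by omega, h⟩
  · rintro ⟨h, h2⟩
    rcases Nat.lt_or_ge i q with h3 | h3
    · exact Or.inl ⟨h2, h3⟩
    · exact Or.inr ⟨h2, by omega⟩

lemma union_filter_erase2 (D : Finset ℕ) (q : ℕ) :
    (D.filter (· < q)) ∪ (D.filter (fun j => q + 1 < j)) = (D.erase (q + 1)).erase q := by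
  ext i
  simp only [Finset.mem_union, Finset.mem_filter, Finset.mem_erase]
  constructor
  · rintro (⟨h, h2⟩ | ⟨h, h2⟩) <;> exact ⟨by omega, by omega, h⟩
  · rintro ⟨h, h2, h3⟩
    rcases Nat.lt_or_ge i q with h4 | h4
    · exact Or.inl ⟨h3, h4⟩
    · exact Or.inr ⟨h3, by omega⟩

lemma Pset_adj {n q : ℕ} {w : ℕ → ℕ} (hP : q ∈ Pset n w) (hP2 : q + 1 ∈ Pset n w) : False := by
  have h1 := (mem_Pset.mp hP).2.2.2
  have h2 := (mem_Pset.mp hP2).2.2.1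
  rw [Nat.add_sub_cancel] at h2
  omega

section InsertWord

variable {n q : ℕ} {w w' : ℕ → ℕ}

variable (hq : q ≤ n) (hw : ∀ j, w j ≤ n)
  (hw' : ∀ j, w' j = if j ≤ q then w j else if j = q + 1 then n + 1 else w (j - 1))

include hw'

lemma w'_le (j : ℕ) (h : j ≤ q) : w' j = w j := by rw [hw']; simp [h]

lemma w'_mid : w' (q + 1) = n + 1 := by rw [hw']; simp

lemma w'_gt (j : ℕ) (h : q + 1 < j) : w' j = w (j - 1) := by
  rw [hw']; rw [if_neg (by omega), if_neg (by omega)]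

include hq hw

lemma Dset_insert :
    Dset (n + 1) w' =
      ((Dset n w).filter (· < q) ∪ ((Dset n w).filter (fun j => q < j)).image (· + 1)) ∪
        (if q < n then {q + 1} else ∅) := by
  ext i
  simp only [Finset.mem_union, Finset.mem_filter, Finset.mem_image, mem_Dset]
  constructor
  · rintro ⟨h1, h2, h3⟩
    rcases lt_trichotomy i q with hiq | hiq | hiq
    · left; left
      rw [w'_le hw' (i + 1) (by omega), w'_le hw' i (by omega)] at h3
      exact ⟨⟨h1, by omega, h3⟩, hiq⟩
    · exfalso
      have B : w' i = w i := w'_le hw' i (by omega)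
      have C : w' (i + 1) = n + 1 := by
        rw [show i + 1 = q + 1 by omega]; exact w'_mid hw'
      rw [B, C] at h3
      have := hw i; omega
    · rcases Nat.lt_or_ge (q + 1) i with hi2 | hi2
      · left; right
        have B : w' i = w (i - 1) := w'_gt hw' i (by omega)
        have C : w' (i + 1) = w (i - 1 + 1) := by
          rw [w'_gt hw' (i + 1) (by omega)]; congr 1; omega
        rw [B, C] at h3
        exact ⟨i - 1, ⟨⟨by omega, by omega, h3⟩, by omega⟩, by omega⟩
      · right
        have hi : i = q + 1 := by omega
        have hqn : q < n := by omega
        simp [hqn, hi]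
  · rintro ((⟨⟨h1, h2, h3⟩, h4⟩ | ⟨j, ⟨⟨h1, h2, h3⟩, h4⟩, h5⟩) | h)
    · rw [w'_le hw' (i + 1) (by omega), w'_le hw' i (by omega)]
      exact ⟨h1, by omega, h3⟩
    · subst h5
      have B : w' (j + 1) = w j := by
        rw [w'_gt hw' (j + 1) (by omega), Nat.add_sub_cancel]
      have C : w' (j + 1 + 1) = w (j + 1) := by
        rw [w'_gt hw' (j + 1 + 1) (by omega), Nat.add_sub_cancel]
      rw [B, C]
      exact ⟨by omega, by omega, h3⟩
    · rcases Nat.lt_or_ge q n with hqn | hqn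
      · rw [if_pos hqn, Finset.mem_singleton] at h
        subst h
        have B : w' (q + 1) = n + 1 := w'_mid hw'
        have C : w' (q + 1 + 1) = w (q + 1) := by
          rw [w'_gt hw' (q + 1 + 1) (by omega), Nat.add_sub_cancel]
        rw [B, C]
        have := hw (q + 1)
        exact ⟨by omega, by omega, by omega⟩
      · rw [if_neg (by omega)] at h; exact absurd h (Finset.notMem_empty i)

lemma Pset_insert :
    Pset (n + 1) w' =
      ((Pset n w).filter (· < q) ∪ ((Pset n w).filter (fun j => q + 1 < j)).image (· + 1)) ∪
        (if q < n then {q + 1} else ∅) := by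
  ext i
  simp only [Finset.mem_union, Finset.mem_filter, Finset.mem_image, mem_Pset]
  constructor
  · rintro ⟨h1, h2, h3, h4⟩
    rcases lt_trichotomy i q with hiq | hiq | hiq
    · left; left
      rw [w'_le hw' (i - 1) (by omega), w'_le hw' i (by omega)] at h3
      rw [w'_le hw' (i + 1) (by omega), w'_le hw' i (by omega)] at h4
      exact ⟨⟨h1, by omega, h3, h4⟩, hiq⟩
    · exfalso
      have B : w' i = w i := w'_le hw' i (by omega)
      have C : w' (i + 1) = n + 1 := by
        rw [show i + 1 = q + 1 by omega]; exact w'_mid hw'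
      rw [B, C] at h4
      have := hw i; omega
    · rcases Nat.lt_or_ge (q + 2) i with hi2 | hi2
      · left; right
        have A : w' (i - 1) = w (i - 1 - 1) := by
          rw [w'_gt hw' (i - 1) (by omega)]
        have B : w' i = w (i - 1) := w'_gt hw' i (by omega)
        have C : w' (i + 1) = w (i - 1 + 1) := by
          rw [w'_gt hw' (i + 1) (by omega)]; congr 1; omega
        rw [A, B] at h3
        rw [B, C] at h4
        exact ⟨i - 1, ⟨⟨by omega, by omega, h3, h4⟩, by omega⟩, by omega⟩
      · rcases Nat.eq_or_lt_of_le hi2 with hi | hi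
        · exfalso
          have A : w' (i - 1) = n + 1 := by
            rw [show i - 1 = q + 1 by omega]; exact w'_mid hw'
          have B : w' i = w (i - 1) := w'_gt hw' i (by omega)
          rw [A, B] at h3
          have := hw (i - 1); omega
        · right
          have hi3 : i = q + 1 := by omega
          have hqn : q < n := by omega
          simp [hqn, hi3]
  · rintro ((⟨⟨h1, h2, h3, h4⟩, h5⟩ | ⟨j, ⟨⟨h1, h2, h3, h4⟩, h5⟩, h6⟩) | h)
    · rw [w'_le hw' (i - 1) (by omega), w'_le hw' i (by omega),
        w'_le hw' (i + 1) (by omega)]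
      exact ⟨h1, by omega, h3, h4⟩
    · subst h6
      have A : w' (j + 1 - 1) = w (j - 1) := by
        rw [show j + 1 - 1 = j by omega, w'_gt hw' j (by omega)]
      have B : w' (j + 1) = w j := by
        rw [w'_gt hw' (j + 1) (by omega), Nat.add_sub_cancel]
      have C : w' (j + 1 + 1) = w (j + 1) := by
        rw [w'_gt hw' (j + 1 + 1) (by omega), Nat.add_sub_cancel]
      rw [A, B, C]
      exact ⟨by omega, by omega, h3, h4⟩
    · rcases Nat.lt_or_ge q n with hqn | hqn
      · rw [if_pos hqn, Finset.mem_singleton] at h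
        subst h
        have A : w' (q + 1 - 1) = w q := by
          rw [show q + 1 - 1 = q by omega, w'_le hw' q le_rfl]
        have B : w' (q + 1) = n + 1 := w'_mid hw'
        have C : w' (q + 1 + 1) = w (q + 1) := by
          rw [w'_gt hw' (q + 1 + 1) (by omega), Nat.add_sub_cancel]
        rw [A, B, C]
        have := hw q
        have := hw (q + 1)
        exact ⟨by omega, by omega, by omega, by omega⟩
      · rw [if_neg (by omega)] at h; exact absurd h (Finset.notMem_empty i)

lemma Dset_insert_card :
    (Dset (n + 1) w').card =
      if q ∈ Dset n w ∨ q = n then (Dset n w).card else (Dset n w).card + 1 := by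
  classical
  rw [Dset_insert hq hw hw']
  set D := Dset n w with hD
  have hAB : Disjoint (D.filter (· < q)) ((D.filter (fun j => q < j)).image (· + 1)) := by
    rw [Finset.disjoint_left]
    intro a ha hb
    simp only [Finset.mem_filter, Finset.mem_image] at ha hb
    obtain ⟨j, ⟨_, hj⟩, hj2⟩ := hb
    change j + 1 = a at hj2
    omega
  have hC : Disjoint ((D.filter (· < q)) ∪ (D.filter (fun j => q < j)).image (· + 1))
      (if q < n then ({q + 1} : Finset ℕ) else ∅) := by
    rw [Finset.disjoint_right]
    intro a ha hb
    split_ifs at ha with h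
    · rw [Finset.mem_singleton] at ha
      simp only [Finset.mem_union, Finset.mem_filter, Finset.mem_image] at hb
      rcases hb with ⟨_, h2⟩ | ⟨j, ⟨_, hj⟩, hj2⟩
      · omega
      · change j + 1 = a at hj2; omega
    · exact absurd ha (Finset.notMem_empty a)
  rw [Finset.card_union_of_disjoint hC, Finset.card_union_of_disjoint hAB,
    Finset.card_image_of_injective _ (add_left_injective 1)]
  have key : (D.filter (· < q)).card + (D.filter (fun j => q < j)).card = (D.erase q).card := by
    rw [← union_filter_erase D q, Finset.card_union_of_disjoint]
    rw [Finset.disjoint_left]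
    intro a ha hb
    simp only [Finset.mem_filter] at ha hb
    omega
  rw [key]
  by_cases hqD : q ∈ D
  · have hqn : q < n := (mem_Dset.mp hqD).2.1
    have hcard : 1 ≤ D.card := Finset.card_pos.mpr ⟨q, hqD⟩
    rw [Finset.card_erase_of_mem hqD, if_pos hqn, if_pos (Or.inl hqD)]
    simp
    omega
  · rw [Finset.erase_eq_of_notMem hqD]
    by_cases hqn : q = n
    · rw [if_neg (by omega), if_pos (Or.inr hqn)]
      simp
    · rw [if_pos (by omega), if_neg (by tauto)]
      simp

lemma Pset_insert_card :
    (Pset (n + 1) w').card =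
      if q ∈ Pset n w ∨ q + 1 ∈ Pset n w ∨ q = n then (Pset n w).card
      else (Pset n w).card + 1 := by
  classical
  rw [Pset_insert hq hw hw']
  set P := Pset n w with hP
  have hAB : Disjoint (P.filter (· < q)) ((P.filter (fun j => q + 1 < j)).image (· + 1)) := by
    rw [Finset.disjoint_left]
    intro a ha hb
    simp only [Finset.mem_filter, Finset.mem_image] at ha hb
    obtain ⟨j, ⟨_, hj⟩, hj2⟩ := hb
    change j + 1 = a at hj2
    omega
  have hC : Disjoint ((P.filter (· < q)) ∪ (P.filter (fun j => q + 1 < j)).image (· + 1))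
      (if q < n then ({q + 1} : Finset ℕ) else ∅) := by
    rw [Finset.disjoint_right]
    intro a ha hb
    split_ifs at ha with h
    · rw [Finset.mem_singleton] at ha
      simp only [Finset.mem_union, Finset.mem_filter, Finset.mem_image] at hb
      rcases hb with ⟨_, h2⟩ | ⟨j, ⟨_, hj⟩, hj2⟩
      · omega
      · change j + 1 = a at hj2; omega
    · exact absurd ha (Finset.notMem_empty a)
  rw [Finset.card_union_of_disjoint hC, Finset.card_union_of_disjoint hAB,
    Finset.card_image_of_injective _ (add_left_injective 1)]
  have key : (P.filter (· < q)).card + (P.filter (fun j => q + 1 < j)).card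
      = ((P.erase (q + 1)).erase q).card := by
    rw [← union_filter_erase2 P q, Finset.card_union_of_disjoint]
    rw [Finset.disjoint_left]
    intro a ha hb
    simp only [Finset.mem_filter] at ha hb
    omega
  rw [key]
  by_cases h1 : q ∈ P
  · have h2 : q + 1 ∉ P := fun h2 => Pset_adj h1 h2
    have hqn : q < n := (mem_Pset.mp h1).2.1
    have hmem : q ∈ P.erase (q + 1) := Finset.mem_erase.mpr ⟨by omega, h1⟩
    have hcard : 1 ≤ (P.erase (q + 1)).card := Finset.card_pos.mpr ⟨q, hmem⟩
    rw [Finset.erase_eq_of_notMem h2] at hmem hcard ⊢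
    rw [Finset.card_erase_of_mem h1, if_pos hqn, if_pos (Or.inl h1)]
    simp
    omega
  · by_cases h2 : q + 1 ∈ P
    · have hqn : q < n := by have := (mem_Pset.mp h2).2.1; omega
      have hq2 : q ∉ P.erase (q + 1) := fun hc => h1 (Finset.mem_erase.mp hc).2
      rw [Finset.erase_eq_of_notMem hq2, Finset.card_erase_of_mem h2,
        if_pos hqn, if_pos (Or.inr (Or.inl h2))]
      have hcard : 1 ≤ P.card := Finset.card_pos.mpr ⟨q + 1, h2⟩
      simp
      omega
    · rw [Finset.erase_eq_of_notMem h2, Finset.erase_eq_of_notMem h1]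
      by_cases hqn : q = n
      · rw [if_neg (by omega), if_pos (by tauto)]
        simp
      · rw [if_pos (by omega), if_neg (by tauto)]
        simp

end InsertWord

lemma permWord_pos {m j : ℕ} (σ : Equiv.Perm (Fin m)) (h1 : 1 ≤ j) (h2 : j ≤ m) :
    permWord m σ j = (σ ⟨j - 1, by omega⟩ : ℕ) + 1 := by
  unfold permWord
  rw [dif_pos ⟨h1, h2⟩]

lemma permWord_out {m j : ℕ} (σ : Equiv.Perm (Fin m)) (h : j = 0 ∨ m < j) :
    permWord m σ j = 0 := by
  unfold permWord
  rw [dif_neg (by omega)]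

lemma permWord_le {m : ℕ} (σ : Equiv.Perm (Fin m)) (j : ℕ) : permWord m σ j ≤ m := by
  unfold permWord
  split
  · exact Nat.succ_le_of_lt (Fin.is_lt _)
  · omega

section InsPerm

variable {n : ℕ}

def insFun (τ : Equiv.Perm (Fin n)) (q : Fin (n + 1)) (i : Fin (n + 1)) : Fin (n + 1) :=
  if h : (i : ℕ) < (q : ℕ) then (τ ⟨i, by have := q.isLt; omega⟩).castSucc
  else if h2 : (i : ℕ) = (q : ℕ) then Fin.last n
  else (τ ⟨(i : ℕ) - 1, by have := i.isLt; omega⟩).castSucc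

lemma insFun_injective (τ : Equiv.Perm (Fin n)) (q : Fin (n + 1)) :
    Function.Injective (insFun τ q) := by
  intro a b hab
  unfold insFun at hab
  have hcl : ∀ x : Fin n, x.castSucc ≠ Fin.last n := fun x => (Fin.castSucc_lt_last x).ne
  split_ifs at hab with h1 h2 h3 h4 h5
  · have := τ.injective (Fin.castSucc_inj.mp hab)
    have := Fin.mk.injEq _ _ _ _ ▸ this
    exact Fin.ext (by simpa using this)
  · exact absurd hab (hcl _)
  · have := τ.injective (Fin.castSucc_inj.mp hab)
    have : (a : ℕ) = (b : ℕ) - 1 := by simpa using this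
    omega
  · exact absurd hab.symm (hcl _)
  · exact Fin.ext (by omega)
  · exact absurd hab.symm (hcl _)
  · have := τ.injective (Fin.castSucc_inj.mp hab)
    have : (a : ℕ) - 1 = (b : ℕ) := by simpa using this
    omega
  · exact absurd hab (hcl _)
  · have := τ.injective (Fin.castSucc_inj.mp hab)
    have : (a : ℕ) - 1 = (b : ℕ) - 1 := by simpa using this
    exact Fin.ext (by omega)

noncomputable def insPerm (τ : Equiv.Perm (Fin n)) (q : Fin (n + 1)) :
    Equiv.Perm (Fin (n + 1)) :=
  Equiv.ofBijective (insFun τ q) (Finite.injective_iff_bijective.mp (insFun_injective τ q))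

lemma insPerm_apply (τ : Equiv.Perm (Fin n)) (q : Fin (n + 1)) (i : Fin (n + 1)) :
    insPerm τ q i = insFun τ q i := rfl

lemma word_insPerm (τ : Equiv.Perm (Fin n)) (q : Fin (n + 1)) (j : ℕ) :
    permWord (n + 1) (insPerm τ q) j =
      if j ≤ (q : ℕ) then permWord n τ j
      else if j = (q : ℕ) + 1 then n + 1 else permWord n τ (j - 1) := by
  have hq := q.isLt
  rcases Nat.eq_zero_or_pos j with rfl | hj
  · rw [permWord_out _ (Or.inl rfl), if_pos (Nat.zero_le _), permWord_out _ (Or.inl rfl)]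
  rcases Nat.lt_or_ge (n + 1) j with hbig | hle
  · rw [permWord_out _ (Or.inr hbig), if_neg (by omega), if_neg (by omega),
      permWord_out _ (Or.inr (by omega))]
  rw [permWord_pos _ hj hle, insPerm_apply]
  rcases Nat.lt_trichotomy (j - 1) (q : ℕ) with h1 | h1 | h1
  · unfold insFun
    rw [dif_pos (show j - 1 < (q : ℕ) from h1), if_pos (show j ≤ (q : ℕ) by omega),
      permWord_pos _ hj (by omega)]
    rfl
  · unfold insFun
    rw [dif_neg (show ¬(j - 1 < (q : ℕ)) by omega), dif_pos (show j - 1 = (q : ℕ) from h1),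
      if_neg (by omega), if_pos (by omega)]
    rfl
  · unfold insFun
    rw [dif_neg (show ¬(j - 1 < (q : ℕ)) by omega), dif_neg (show ¬(j - 1 = (q : ℕ)) by omega),
      if_neg (by omega), if_neg (by omega), permWord_pos _ (by omega) (by omega)]
    rfl

lemma insFun_lt (τ : Equiv.Perm (Fin n)) (q : Fin (n + 1)) (i : Fin (n + 1))
    (h : (i : ℕ) < (q : ℕ)) :
    insFun τ q i = (τ ⟨(i : ℕ), by have := q.isLt; omega⟩).castSucc := by
  unfold insFun
  rw [dif_pos (show (i : ℕ) < (q : ℕ) from h)]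

lemma insFun_gt (τ : Equiv.Perm (Fin n)) (q : Fin (n + 1)) (i : Fin (n + 1))
    (h : (q : ℕ) < (i : ℕ)) :
    insFun τ q i = (τ ⟨(i : ℕ) - 1, by have := i.isLt; omega⟩).castSucc := by
  unfold insFun
  rw [dif_neg (show ¬((i : ℕ) < (q : ℕ)) by omega), dif_neg (show ¬((i : ℕ) = (q : ℕ)) by omega)]

lemma insPerm_prod_injective :
    Function.Injective (fun p : Equiv.Perm (Fin n) × Fin (n + 1) => insPerm p.1 p.2) := by
  rintro ⟨τ, q⟩ ⟨τ', q'⟩ h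
  simp only at h
  have happ : ∀ i, insFun τ q i = insFun τ' q' i := fun i => by
    rw [← insPerm_apply, ← insPerm_apply, h]
  have hcl : ∀ x : Fin n, x.castSucc ≠ Fin.last n := fun x => (Fin.castSucc_lt_last x).ne
  have hql : insFun τ q q = Fin.last n := by
    unfold insFun; rw [dif_neg (by omega), dif_pos rfl]
  have hqq : q = q' := by
    by_contra hne
    have hthis := happ q
    rw [hql] at hthis
    rcases Nat.lt_trichotomy (q : ℕ) (q' : ℕ) with hlt | heq | hgt
    · rw [insFun_lt τ' q' q hlt] at hthis
      exact hcl _ hthis.symm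
    · exact hne (Fin.ext heq)
    · rw [insFun_gt τ' q' q hgt] at hthis
      exact hcl _ hthis.symm
  subst hqq
  have hττ : τ = τ' := by
    apply Equiv.ext
    intro i
    rcases Nat.lt_or_ge (i : ℕ) (q : ℕ) with hlt | hge
    · have hthis := happ ⟨(i : ℕ), by have := i.isLt; omega⟩
      rw [insFun_lt τ q _ hlt, insFun_lt τ' q _ hlt] at hthis
      have h3 := Fin.castSucc_inj.mp hthis
      have h4 : τ ⟨(i : ℕ), i.isLt⟩ = τ' ⟨(i : ℕ), i.isLt⟩ := h3
      simpa [Fin.eta] using h4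
    · have hi1 : (i : ℕ) + 1 < n + 1 := by have := i.isLt; omega
      have hthis := happ ⟨(i : ℕ) + 1, hi1⟩
      rw [insFun_gt τ q _ (show (q : ℕ) < (i : ℕ) + 1 by omega),
        insFun_gt τ' q _ (show (q : ℕ) < (i : ℕ) + 1 by omega)] at hthis
      have h3 := Fin.castSucc_inj.mp hthis
      have h4 : τ ⟨(i : ℕ), i.isLt⟩ = τ' ⟨(i : ℕ), i.isLt⟩ := h3
      simpa [Fin.eta] using h4
  rw [hττ]

lemma sum_insPerm {M : Type*} [AddCommMonoid M] (g : Equiv.Perm (Fin (n + 1)) → M) :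
    ∑ σ : Equiv.Perm (Fin (n + 1)), g σ =
      ∑ τ : Equiv.Perm (Fin n), ∑ q : Fin (n + 1), g (insPerm τ q) := by
  have hbij : Function.Bijective
      (fun p : Equiv.Perm (Fin n) × Fin (n + 1) => insPerm p.1 p.2) := by
    rw [Fintype.bijective_iff_injective_and_card]
    refine ⟨insPerm_prod_injective, ?_⟩
    simp [Fintype.card_perm, Nat.factorial_succ, mul_comm]
  calc ∑ σ : Equiv.Perm (Fin (n + 1)), g σ
      = ∑ p : Equiv.Perm (Fin n) × Fin (n + 1), g (insPerm p.1 p.2) :=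
        (Fintype.sum_bijective _ hbij _ g (fun p => rfl)).symm
    _ = ∑ τ : Equiv.Perm (Fin n), ∑ q : Fin (n + 1), g (insPerm τ q) :=
        Fintype.sum_prod_type (f := fun p : Equiv.Perm (Fin n) × Fin (n + 1) => g (insPerm p.1 p.2))

end InsPerm

section Counts

variable {n : ℕ} (τ : Equiv.Perm (Fin n))

lemma numDescents_insPerm (q : Fin (n + 1)) :
    numDescents (n + 1) (insPerm τ q) =
      if (q : ℕ) ∈ Dset n (permWord n τ) ∨ (q : ℕ) = n then numDescents n τ
      else numDescents n τ + 1 := by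
  rw [numDescents_eq, numDescents_eq,
    Dset_insert_card (show (q : ℕ) ≤ n by have := q.isLt; omega) (permWord_le τ)
      (word_insPerm τ q)]

lemma numLeftPeaks_insPerm (q : Fin (n + 1)) :
    numLeftPeaks (n + 1) (insPerm τ q) =
      if (q : ℕ) ∈ Pset n (permWord n τ) ∨ (q : ℕ) + 1 ∈ Pset n (permWord n τ) ∨ (q : ℕ) = n
      then numLeftPeaks n τ else numLeftPeaks n τ + 1 := by
  rw [numLeftPeaks_eq, numLeftPeaks_eq,
    Pset_insert_card (show (q : ℕ) ≤ n by have := q.isLt; omega) (permWord_le τ)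
      (word_insPerm τ q)]

lemma filter_Dcond_card :
    ((Finset.range (n + 1)).filter
      (fun q => q ∈ Dset n (permWord n τ) ∨ q = n)).card = numDescents n τ + 1 := by
  have hset : (Finset.range (n + 1)).filter (fun q => q ∈ Dset n (permWord n τ) ∨ q = n)
      = insert n (Dset n (permWord n τ)) := by
    ext i
    simp only [Finset.mem_filter, Finset.mem_range, Finset.mem_insert]
    constructor
    · rintro ⟨h1, h2 | h2⟩
      · exact Or.inr h2
      · exact Or.inl h2
    · rintro (rfl | h2)
      · exact ⟨by omega, Or.inr rfl⟩
      · have := mem_Dset.mp h2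
        exact ⟨by omega, Or.inl h2⟩
  rw [hset, Finset.card_insert_of_notMem (fun hc => by have := mem_Dset.mp hc; omega),
    ← numDescents_eq]

lemma filter_Pcond_card :
    ((Finset.range (n + 1)).filter
      (fun q => q ∈ Pset n (permWord n τ) ∨ q + 1 ∈ Pset n (permWord n τ) ∨ q = n)).card
      = 2 * numLeftPeaks n τ + 1 := by
  set P := Pset n (permWord n τ) with hP
  have hset : (Finset.range (n + 1)).filter (fun q => q ∈ P ∨ q + 1 ∈ P ∨ q = n)
      = insert n (P ∪ P.image (· - 1)) := by
    ext i
    simp only [Finset.mem_filter, Finset.mem_range, Finset.mem_insert, Finset.mem_union,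
      Finset.mem_image]
    constructor
    · rintro ⟨h1, h2 | h2 | h2⟩
      · exact Or.inr (Or.inl h2)
      · exact Or.inr (Or.inr ⟨i + 1, h2, by omega⟩)
      · exact Or.inl h2
    · rintro (rfl | h2 | ⟨j, hj, rfl⟩)
      · exact ⟨by omega, Or.inr (Or.inr rfl)⟩
      · have := mem_Pset.mp h2
        exact ⟨by omega, Or.inl h2⟩
      · have := mem_Pset.mp hj
        refine ⟨by omega, Or.inr (Or.inl ?_)⟩
        have e : j - 1 + 1 = j := by omega
        rw [e]
        exact hj
  rw [hset]
  have hd : Disjoint P (P.image (· - 1)) := by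
    rw [Finset.disjoint_left]
    intro a ha hb
    simp only [Finset.mem_image] at hb
    obtain ⟨j, hj, hj2⟩ := hb
    change j - 1 = a at hj2
    have h1 := mem_Pset.mp hj
    have e : j = a + 1 := by omega
    rw [e] at hj
    exact Pset_adj ha hj
  have hni : n ∉ P ∪ P.image (· - 1) := by
    rw [Finset.mem_union]
    rintro (h | h)
    · have := mem_Pset.mp h; omega
    · simp only [Finset.mem_image] at h
      obtain ⟨j, hj, hj2⟩ := h
      change j - 1 = n at hj2
      have := mem_Pset.mp hj
      omega
  rw [Finset.card_insert_of_notMem hni, Finset.card_union_of_disjoint hd,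
    Finset.card_image_of_injOn (fun a ha b hb hab => by
      have h1 := mem_Pset.mp ha
      have h2 := mem_Pset.mp hb
      change a - 1 = b - 1 at hab
      omega),
    ← numLeftPeaks_eq]
  ring

lemma numDescents_le : numDescents n τ ≤ n := by
  have h := filter_Dcond_card τ
  have h2 := Finset.card_filter_le (Finset.range (n + 1))
    (fun q => q ∈ Dset n (permWord n τ) ∨ q = n)
  rw [h, Finset.card_range] at h2
  omega

lemma two_numLeftPeaks_le : 2 * numLeftPeaks n τ ≤ n := by
  have h := filter_Pcond_card τ
  have h2 := Finset.card_filter_le (Finset.range (n + 1))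
    (fun q => q ∈ Pset n (permWord n τ) ∨ q + 1 ∈ Pset n (permWord n τ) ∨ q = n)
  rw [h, Finset.card_range] at h2
  omega

lemma sum_q_des {M : Type*} [AddCommMonoid M] (f : ℕ → M) :
    ∑ q : Fin (n + 1), f (numDescents (n + 1) (insPerm τ q))
      = (numDescents n τ + 1) • f (numDescents n τ)
        + (n - numDescents n τ) • f (numDescents n τ + 1) := by
  have h1 : ∀ q : Fin (n + 1), f (numDescents (n + 1) (insPerm τ q)) =
      (fun x => if x ∈ Dset n (permWord n τ) ∨ x = n then f (numDescents n τ)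
        else f (numDescents n τ + 1)) ((q : ℕ)) := by
    intro q
    rw [numDescents_insPerm τ q]
    by_cases h : (q : ℕ) ∈ Dset n (permWord n τ) ∨ (q : ℕ) = n
    · rw [if_pos h]; simp only [if_pos h]
    · rw [if_neg h]; simp only [if_neg h]
  rw [Finset.sum_congr rfl (fun q _ => h1 q),
    Fin.sum_univ_eq_sum_range
      (fun x => if x ∈ Dset n (permWord n τ) ∨ x = n then f (numDescents n τ)
        else f (numDescents n τ + 1)) (n + 1),
    Finset.sum_ite, Finset.sum_const, Finset.sum_const, filter_Dcond_card]
  have h2 : ((Finset.range (n + 1)).filter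
      (fun x => ¬(x ∈ Dset n (permWord n τ) ∨ x = n))).card = n - numDescents n τ := by
    have h4 := Finset.card_filter_add_card_filter_not
      (s := Finset.range (n + 1)) (p := fun q => q ∈ Dset n (permWord n τ) ∨ q = n)
    rw [filter_Dcond_card, Finset.card_range] at h4
    omega
  rw [h2]

lemma sum_q_lpk {M : Type*} [AddCommMonoid M] (f : ℕ → M) :
    ∑ q : Fin (n + 1), f (numLeftPeaks (n + 1) (insPerm τ q))
      = (2 * numLeftPeaks n τ + 1) • f (numLeftPeaks n τ)
        + (n - 2 * numLeftPeaks n τ) • f (numLeftPeaks n τ + 1) := by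
  have h1 : ∀ q : Fin (n + 1), f (numLeftPeaks (n + 1) (insPerm τ q)) =
      (fun x => if x ∈ Pset n (permWord n τ) ∨ x + 1 ∈ Pset n (permWord n τ) ∨ x = n
        then f (numLeftPeaks n τ) else f (numLeftPeaks n τ + 1)) ((q : ℕ)) := by
    intro q
    rw [numLeftPeaks_insPerm τ q]
    by_cases h : (q : ℕ) ∈ Pset n (permWord n τ) ∨ (q : ℕ) + 1 ∈ Pset n (permWord n τ)
        ∨ (q : ℕ) = n
    · rw [if_pos h]; simp only [if_pos h]
    · rw [if_neg h]; simp only [if_neg h]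
  rw [Finset.sum_congr rfl (fun q _ => h1 q),
    Fin.sum_univ_eq_sum_range
      (fun x => if x ∈ Pset n (permWord n τ) ∨ x + 1 ∈ Pset n (permWord n τ) ∨ x = n
        then f (numLeftPeaks n τ) else f (numLeftPeaks n τ + 1)) (n + 1),
    Finset.sum_ite, Finset.sum_const, Finset.sum_const, filter_Pcond_card]
  have h2 : ((Finset.range (n + 1)).filter
      (fun x => ¬(x ∈ Pset n (permWord n τ) ∨ x + 1 ∈ Pset n (permWord n τ) ∨ x = n))).card
      = n - 2 * numLeftPeaks n τ := by
    have h4 := Finset.card_filter_add_card_filter_not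
      (s := Finset.range (n + 1))
      (p := fun q => q ∈ Pset n (permWord n τ) ∨ q + 1 ∈ Pset n (permWord n τ) ∨ q = n)
    rw [filter_Pcond_card, Finset.card_range] at h4
    omega
  rw [h2]

end Counts

section Poly

open Polynomial

noncomputable def BP (k : ℕ) : Polynomial ℝ :=
  if k = 0 then 1 else ∑ σ : Equiv.Perm (Fin k), X ^ (numDescents k σ + 1)

noncomputable def FP (n : ℕ) : Polynomial ℝ :=
  ∑ σ : Equiv.Perm (Fin n), (4 * X) ^ numLeftPeaks n σ * (1 + X) ^ (n - 2 * numLeftPeaks n σ)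

noncomputable def GP (n : ℕ) : Polynomial ℝ :=
  ∑ k ∈ Finset.range (n + 1), C ((n.choose k : ℝ) * 2 ^ k) * ((1 - X) ^ (n - k) * BP k)

lemma numDescents_one (σ : Equiv.Perm (Fin 1)) : numDescents 1 σ = 0 := by
  unfold numDescents
  rw [Finset.card_eq_zero, Finset.filter_eq_empty_iff]
  intro i hi
  rw [Finset.mem_range] at hi
  rintro ⟨h1, h2, h3⟩
  omega

lemma numLeftPeaks_zero (σ : Equiv.Perm (Fin 0)) : numLeftPeaks 0 σ = 0 := by
  unfold numLeftPeaks
  rw [Finset.card_eq_zero, Finset.filter_eq_empty_iff]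
  intro i hi
  rintro ⟨h1, h2, h3⟩
  omega

lemma BP_succ (k : ℕ) :
    BP (k + 1) = ((k : Polynomial ℝ) + 1) * X * BP k + X * (1 - X) * derivative (BP k) := by
  rcases k with _ | m
  · have h1 : BP 1 = ∑ σ : Equiv.Perm (Fin 1), X ^ (numDescents 1 σ + 1) := if_neg one_ne_zero
    rw [h1, Finset.sum_congr rfl (fun σ _ => by rw [numDescents_one σ])]
    rw [Finset.sum_const, Finset.card_univ]
    simp [BP, Fintype.card_perm]
  · have h1 : BP (m + 2) = ∑ σ : Equiv.Perm (Fin (m + 2)), X ^ (numDescents (m + 2) σ + 1) :=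
      if_neg (by omega)
    have h2 : BP (m + 1) = ∑ τ : Equiv.Perm (Fin (m + 1)), X ^ (numDescents (m + 1) τ + 1) :=
      if_neg (by omega)
    rw [h1, sum_insPerm (g := fun σ => (X : Polynomial ℝ) ^ (numDescents (m + 2) σ + 1))]
    have step : ∀ τ : Equiv.Perm (Fin (m + 1)),
        ∑ q : Fin (m + 2), (X : Polynomial ℝ) ^ (numDescents (m + 2) (insPerm τ q) + 1)
        = (numDescents (m + 1) τ + 1) • (X : Polynomial ℝ) ^ (numDescents (m + 1) τ + 1)
          + ((m + 1) - numDescents (m + 1) τ) • (X : Polynomial ℝ) ^ (numDescents (m + 1) τ + 2) :=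
      fun τ => sum_q_des τ (fun t => (X : Polynomial ℝ) ^ (t + 1))
    rw [Finset.sum_congr rfl (fun τ _ => step τ)]
    rw [h2, Finset.mul_sum, map_sum, Finset.mul_sum, ← Finset.sum_add_distrib]
    refine Finset.sum_congr rfl (fun τ _ => ?_)
    have hd := numDescents_le τ
    set d := numDescents (m + 1) τ with hdd
    rw [derivative_X_pow, nsmul_eq_mul, nsmul_eq_mul, Nat.cast_sub hd]
    rw [Nat.add_sub_cancel, C_eq_natCast]
    push_cast
    ring

lemma X_mul_derivative_four_X_pow (p : ℕ) :
    X * derivative ((4 * X : Polynomial ℝ) ^ p) = (p : Polynomial ℝ) * (4 * X) ^ p := by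
  rcases p with _ | p
  · simp
  · rw [derivative_pow_succ]
    have h4 : derivative (4 * X : Polynomial ℝ) = 4 := by simp
    rw [h4, show (C ((p : ℝ) + 1) : Polynomial ℝ) = ((p : Polynomial ℝ) + 1) by
      rw [C_add, C_1, C_eq_natCast]]
    push_cast
    ring

lemma one_sub_X_mul_derivative_pow (m : ℕ) :
    (1 - X) * derivative ((1 - X : Polynomial ℝ) ^ m)
      = -(m : Polynomial ℝ) * (1 - X) ^ m := by
  rcases m with _ | m
  · simp
  · rw [derivative_pow_succ]
    have h1 : derivative (1 - X : Polynomial ℝ) = -1 := by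
      rw [derivative_sub, derivative_one, derivative_X]; ring
    rw [h1, show (C ((m : ℝ) + 1) : Polynomial ℝ) = ((m : Polynomial ℝ) + 1) by
      rw [C_add, C_1, C_eq_natCast]]
    push_cast
    ring

lemma one_sub_X_ne_zero : (1 - X : Polynomial ℝ) ≠ 0 := fun h => by
  have := congrArg (fun p => Polynomial.eval 0 p) h
  simp at this

lemma key_lpk (n p : ℕ) (hp : 2 * p ≤ n) :
    (2 * p + 1) • ((4 * X : Polynomial ℝ) ^ p * (1 + X) ^ (n + 1 - 2 * p))
      + (n - 2 * p) • ((4 * X : Polynomial ℝ) ^ (p + 1) * (1 + X) ^ (n + 1 - 2 * (p + 1)))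
    = (1 + (2 * (n : Polynomial ℝ) + 1) * X) * ((4 * X) ^ p * (1 + X) ^ (n - 2 * p))
      + 2 * X * (1 - X) * derivative ((4 * X : Polynomial ℝ) ^ p * (1 + X) ^ (n - 2 * p)) := by
  obtain ⟨m, rfl⟩ : ∃ m, n = m + 2 * p := ⟨n - 2 * p, by omega⟩
  rw [show m + 2 * p + 1 - 2 * p = m + 1 by omega, show m + 2 * p - 2 * p = m by omega,
    show m + 2 * p + 1 - 2 * (p + 1) = m - 1 by omega]
  rcases m with _ | m
  · rw [zero_smul, add_zero, pow_zero, mul_one, nsmul_eq_mul]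
    apply mul_left_cancel₀ (Polynomial.X_ne_zero (R := ℝ))
    have hu := X_mul_derivative_four_X_pow p
    push_cast
    linear_combination (-(2 * X * (1 - (X : Polynomial ℝ)))) * hu
  · rw [nsmul_eq_mul, nsmul_eq_mul, Nat.succ_sub_one]
    rw [derivative_mul, derivative_pow_succ (1 + X : Polynomial ℝ) m]
    have hv : derivative (1 + X : Polynomial ℝ) = 1 := by
      rw [derivative_add, derivative_one, derivative_X]; ring
    rw [hv, show (C ((m : ℝ) + 1) : Polynomial ℝ) = ((m : Polynomial ℝ) + 1) by
      rw [C_add, C_1, C_eq_natCast]]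
    apply mul_left_cancel₀ (Polynomial.X_ne_zero (R := ℝ))
    have hu := X_mul_derivative_four_X_pow p
    push_cast
    linear_combination (-(2 * X * (1 - (X : Polynomial ℝ)) * (1 + X) ^ (m + 1))) * hu

lemma key_des (n k : ℕ) (hk : k ≤ n) :
    (1 + (2 * (n : Polynomial ℝ) + 1) * X) * ((1 - X) ^ (n - k) * BP k)
      + 2 * X * (1 - X) * derivative ((1 - X : Polynomial ℝ) ^ (n - k) * BP k)
    = (1 - X) ^ (n + 1 - k) * BP k + 2 * ((1 - X) ^ (n - k) * BP (k + 1)) := by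
  obtain ⟨m, rfl⟩ : ∃ m, n = m + k := ⟨n - k, by omega⟩
  rw [show m + k - k = m by omega, show m + k + 1 - k = m + 1 by omega]
  apply mul_left_cancel₀ one_sub_X_ne_zero
  rw [derivative_mul]
  have hd := one_sub_X_mul_derivative_pow m
  have hBP := BP_succ k
  push_cast
  linear_combination (2 * X * (1 - (X : Polynomial ℝ)) * BP k) * hd
    - (2 * (1 - (X : Polynomial ℝ)) ^ (m + 1)) * hBP

lemma FP_succ (n : ℕ) :
    FP (n + 1) = (1 + (2 * (n : Polynomial ℝ) + 1) * X) * FP n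
      + 2 * X * (1 - X) * derivative (FP n) := by
  rw [show FP (n + 1) = ∑ σ : Equiv.Perm (Fin (n + 1)),
      (4 * X : Polynomial ℝ) ^ numLeftPeaks (n + 1) σ
        * (1 + X) ^ ((n + 1) - 2 * numLeftPeaks (n + 1) σ) from rfl]
  rw [sum_insPerm (g := fun σ => (4 * X : Polynomial ℝ) ^ numLeftPeaks (n + 1) σ
    * (1 + X) ^ ((n + 1) - 2 * numLeftPeaks (n + 1) σ))]
  have step : ∀ τ : Equiv.Perm (Fin n),
      ∑ q : Fin (n + 1), (4 * X : Polynomial ℝ) ^ numLeftPeaks (n + 1) (insPerm τ q)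
        * (1 + X) ^ ((n + 1) - 2 * numLeftPeaks (n + 1) (insPerm τ q))
      = (2 * numLeftPeaks n τ + 1) •
          ((4 * X : Polynomial ℝ) ^ numLeftPeaks n τ * (1 + X) ^ (n + 1 - 2 * numLeftPeaks n τ))
        + (n - 2 * numLeftPeaks n τ) •
          ((4 * X : Polynomial ℝ) ^ (numLeftPeaks n τ + 1)
            * (1 + X) ^ (n + 1 - 2 * (numLeftPeaks n τ + 1))) :=
    fun τ => sum_q_lpk τ (fun t => (4 * X : Polynomial ℝ) ^ t * (1 + X) ^ ((n + 1) - 2 * t))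
  rw [Finset.sum_congr rfl (fun τ _ => step τ)]
  rw [show FP n = ∑ τ : Equiv.Perm (Fin n), (4 * X : Polynomial ℝ) ^ numLeftPeaks n τ
    * (1 + X) ^ (n - 2 * numLeftPeaks n τ) from rfl]
  rw [map_sum, Finset.mul_sum, Finset.mul_sum, ← Finset.sum_add_distrib]
  exact Finset.sum_congr rfl (fun τ _ => key_lpk n (numLeftPeaks n τ) (two_numLeftPeaks_le τ))

lemma GP_succ (n : ℕ) :
    GP (n + 1) = (1 + (2 * (n : Polynomial ℝ) + 1) * X) * GP n
      + 2 * X * (1 - X) * derivative (GP n) := by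
  have hR : (1 + (2 * (n : Polynomial ℝ) + 1) * X) * GP n + 2 * X * (1 - X) * derivative (GP n)
      = ∑ k ∈ Finset.range (n + 1), C ((n.choose k : ℝ) * 2 ^ k) *
          ((1 - X) ^ (n + 1 - k) * BP k + 2 * ((1 - X) ^ (n - k) * BP (k + 1))) := by
    rw [GP, map_sum, Finset.mul_sum, Finset.mul_sum, ← Finset.sum_add_distrib]
    refine Finset.sum_congr rfl (fun k hk => ?_)
    rw [Finset.mem_range] at hk
    rw [derivative_C_mul, ← key_des n k (by omega)]
    ring
  rw [hR]
  have hT1 : ∀ k, C (((n + 1).choose (k + 1) : ℝ) * 2 ^ (k + 1)) * ((1 - X) ^ (n - k) * BP (k + 1))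
      = C ((n.choose k : ℝ) * 2 ^ k) * (2 * ((1 - X) ^ (n - k) * BP (k + 1)))
        + C ((n.choose (k + 1) : ℝ) * 2 ^ (k + 1)) * ((1 - X) ^ (n - k) * BP (k + 1)) := fun k => by
    rw [Nat.choose_succ_succ']
    simp only [C_mul, C_pow, C_eq_natCast, map_ofNat]
    push_cast
    ring
  rw [GP, Finset.sum_range_succ']
  have hE : ∑ k ∈ Finset.range (n + 1), C (((n + 1).choose (k + 1) : ℝ) * 2 ^ (k + 1))
        * ((1 - X) ^ (n + 1 - (k + 1)) * BP (k + 1))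
      = ∑ k ∈ Finset.range (n + 1), C (((n + 1).choose (k + 1) : ℝ) * 2 ^ (k + 1))
        * ((1 - X) ^ (n - k) * BP (k + 1)) :=
    Finset.sum_congr rfl (fun k _ => by rw [show n + 1 - (k + 1) = n - k from by omega])
  rw [hE, Finset.sum_congr rfl (fun k (_ : k ∈ Finset.range (n + 1)) => hT1 k),
    Finset.sum_add_distrib]
  have hsplit : ∑ k ∈ Finset.range (n + 1), C ((n.choose k : ℝ) * 2 ^ k) *
      ((1 - X) ^ (n + 1 - k) * BP k + 2 * ((1 - X) ^ (n - k) * BP (k + 1)))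
      = (∑ k ∈ Finset.range (n + 1), C ((n.choose k : ℝ) * 2 ^ k) * ((1 - X) ^ (n + 1 - k) * BP k))
        + ∑ k ∈ Finset.range (n + 1),
            C ((n.choose k : ℝ) * 2 ^ k) * (2 * ((1 - X) ^ (n - k) * BP (k + 1))) := by
    rw [← Finset.sum_add_distrib]
    exact Finset.sum_congr rfl (fun k _ => by ring)
  rw [hsplit]
  have hA : ∑ k ∈ Finset.range (n + 1), C ((n.choose k : ℝ) * 2 ^ k)
      * ((1 - X) ^ (n + 1 - k) * BP k)
      = (∑ k ∈ Finset.range n, C ((n.choose (k + 1) : ℝ) * 2 ^ (k + 1))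
          * ((1 - X) ^ (n + 1 - (k + 1)) * BP (k + 1)))
        + C ((n.choose 0 : ℝ) * 2 ^ 0) * ((1 - X) ^ (n + 1 - 0) * BP 0) :=
    Finset.sum_range_succ' _ n
  have hT2 : ∑ k ∈ Finset.range (n + 1), C ((n.choose (k + 1) : ℝ) * 2 ^ (k + 1))
      * ((1 - X) ^ (n - k) * BP (k + 1))
      = ∑ k ∈ Finset.range n, C ((n.choose (k + 1) : ℝ) * 2 ^ (k + 1))
          * ((1 - X) ^ (n + 1 - (k + 1)) * BP (k + 1)) := by
    rw [Finset.sum_range_succ, Nat.choose_succ_self]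
    norm_num
    exact Finset.sum_congr rfl (fun k hk => by
      rw [Finset.mem_range] at hk
      rw [show n + 1 - (k + 1) = n - k from by omega])
  rw [hT2, hA]
  have hf0 : C (((n + 1).choose 0 : ℝ) * 2 ^ 0) * ((1 - X) ^ (n + 1 - 0) * BP 0)
      = C ((n.choose 0 : ℝ) * 2 ^ 0) * ((1 - X) ^ (n + 1 - 0) * BP 0) := by
    rw [Nat.choose_zero_right, Nat.choose_zero_right]
  rw [hf0]
  ring

lemma FP_zero : FP 0 = 1 := by
  rw [show FP 0 = ∑ σ : Equiv.Perm (Fin 0), (4 * X : Polynomial ℝ) ^ numLeftPeaks 0 σ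
    * (1 + X) ^ (0 - 2 * numLeftPeaks 0 σ) from rfl]
  rw [Finset.sum_congr rfl (fun σ _ => by rw [numLeftPeaks_zero σ])]
  simp

lemma GP_zero : GP 0 = 1 := by
  rw [GP, Finset.sum_range_one]
  simp [BP]

lemma FP_eq_GP (n : ℕ) : FP n = GP n := by
  induction n with
  | zero => rw [FP_zero, GP_zero]
  | succ n ih => rw [FP_succ, GP_succ, ih]

end Poly

end Petersen

/-- Petersen's identity. -/
theorem petersen_identity (n : ℕ) (x : ℝ) (hx : 1 + x ≠ 0) :
    leftPeakEval n (4 * x / (1 + x) ^ 2) =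
      ((1 + x) ^ n)⁻¹ *
        ∑ k ∈ Finset.range (n + 1),
          (n.choose k : ℝ) * (1 - x) ^ (n - k) * 2 ^ k * eulerianEval k x := by

  classical
  have hFP : (Petersen.FP n).eval x
      = ∑ σ : Equiv.Perm (Fin n),
          (4 * x) ^ numLeftPeaks n σ * (1 + x) ^ (n - 2 * numLeftPeaks n σ) := by
    rw [Petersen.FP, Polynomial.eval_finset_sum]
    refine Finset.sum_congr rfl (fun σ _ => ?_)
    simp
  have hGP : (Petersen.GP n).eval x
      = ∑ k ∈ Finset.range (n + 1),
          (n.choose k : ℝ) * (1 - x) ^ (n - k) * 2 ^ k * eulerianEval k x := by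
    rw [Petersen.GP, Polynomial.eval_finset_sum]
    refine Finset.sum_congr rfl (fun k _ => ?_)
    have hBP : (Petersen.BP k).eval x = eulerianEval k x := by
      rw [Petersen.BP, eulerianEval]
      split_ifs with h
      · simp
      · rw [Polynomial.eval_finset_sum]
        exact Finset.sum_congr rfl (fun σ _ => by simp)
    simp only [Polynomial.eval_mul, Polynomial.eval_C, Polynomial.eval_pow,
      Polynomial.eval_sub, Polynomial.eval_one, Polynomial.eval_X, hBP]
    ring
  have hlhs : leftPeakEval n (4 * x / (1 + x) ^ 2)
      = ((1 + x) ^ n)⁻¹ * (Petersen.FP n).eval x := by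
    rw [leftPeakEval, hFP, Finset.mul_sum]
    refine Finset.sum_congr rfl (fun σ _ => ?_)
    have hp := Petersen.two_numLeftPeaks_le σ
    have hsplit : (1 + x) ^ n
        = (1 + x) ^ (2 * numLeftPeaks n σ) * (1 + x) ^ (n - 2 * numLeftPeaks n σ) := by
      rw [← pow_add]
      congr 1
      omega
    rw [div_pow, ← pow_mul, hsplit]
    have h1 : (1 + x) ^ (2 * numLeftPeaks n σ) ≠ 0 := pow_ne_zero _ hx
    have h2 : (1 + x) ^ (n - 2 * numLeftPeaks n σ) ≠ 0 := pow_ne_zero _ hx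
    field_simp
  rw [hlhs, Petersen.FP_eq_GP, hGP]
end
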